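/- arXiv:2003.01495 — 2 statements merged into one kernel-verified Lean document; each statement's English description precedes it below -/
import Mathlib

section
/- For every c ∈ ℤ/7ℤ and every vertex v = (x,y) ∈ ℤ × ℤ, setting c' = x + 2y (mod 7) (so that v ∈ D'_{c'}), there exists a bijection φ : D_c → D'_{c'} such that for every u ∈ D_c, either φ(u) = u or φ(u) is adjacent to u in the infinite strong grid G∞. In other words, from any configuration D_c the guards can move, each staying in place or moving to an adjacent vertex, into a configuration D'_{c'} containing the attacked vertex v. -/
/-- The infinite strong grid on `ℤ × ℤ`: distinct vertices are adjacent iff both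
coordinates differ by at most 1. -/
def strongGridInf : SimpleGraph (ℤ × ℤ) where
  Adj p q := p ≠ q ∧ |p.1 - q.1| ≤ 1 ∧ |p.2 - q.2| ≤ 1
  symm := by
    constructor
    intro p q h
    exact ⟨h.1.symm, by rw [abs_sub_comm]; exact h.2.1, by rw [abs_sub_comm]; exact h.2.2⟩
  loopless := by
    constructor
    intro p h
    exact h.1 rfl

/-- `S` is a dominating set of `G`: every vertex is in `S` or adjacent to a vertex of `S`. -/
def IsDomSet {V : Type*} (G : SimpleGraph V) (S : Set V) : Prop :=
  ∀ v : V, v ∈ S ∨ ∃ u ∈ S, G.Adj v u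

/-- `F` is an eternal domination family for `G`. -/
def IsEternalDomFamily {V : Type*} (G : SimpleGraph V) (F : Set (Set V)) : Prop :=
  F.Nonempty ∧ (∀ C ∈ F, IsDomSet G C) ∧
    ∀ C ∈ F, ∀ v : V, ∃ C' ∈ F, v ∈ C' ∧
      ∃ φ : C ≃ C', ∀ u : C, (φ u : V) = (u : V) ∨ G.Adj (u : V) (φ u : V)

/-- The configuration `D_c = {(i,j) : 3i + j ≡ c (mod 7)}`. -/
def Dset (c : ZMod 7) : Set (ℤ × ℤ) := {p | ((3 * p.1 + p.2 : ℤ) : ZMod 7) = c}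

/-- The configuration `D'_c = {(i,j) : i + 2j ≡ c (mod 7)}`. -/
def D'set (c : ZMod 7) : Set (ℤ × ℤ) := {p | ((p.1 + 2 * p.2 : ℤ) : ZMod 7) = c}

/-!
Both configurations are fibres of additive forms `ℤ × ℤ → ℤ/7`: `D_c` of `f(i,j) = 3i + j` and
`D'_c` of `g(i,j) = i + 2j`. There is an offset `o(t) ∈ {-1,0,1}²` for each `t ∈ ℤ/7` with
`g(o(t)) = t` and `t ↦ f(o(t))` bijective. Moving the guard at `u` by `o(c' - g(u))` lands it in
`D'_{c'}`, and since `f` is constant on `D_c` the offset, hence `u`, can be recovered from the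
new value of `f`.
-/

section FiberShift

variable {A M : Type*} [AddCommGroup A] [AddCommGroup M]

noncomputable def fiberShiftEquiv (f g : A →+ M) (off : M → A) (hg : ∀ t, g (off t) = t)
    (hf : Function.Bijective (f ∘ off)) (c c' : M) :
    {a | f a = c} ≃ {a | g a = c'} where
  toFun a := ⟨a + off (c' - g a), by simp [hg]⟩
  invFun b := ⟨b - off ((Equiv.ofBijective _ hf).symm (f b - c)), by
    have h := (Equiv.ofBijective _ hf).apply_symm_apply (f b - c)
    simp only [Equiv.ofBijective_apply, Function.comp_apply] at h
    simp [h]⟩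
  left_inv := by
    rintro ⟨a, ha : f a = c⟩
    have hfa : f (a + off (c' - g a)) - c = (f ∘ off) (c' - g a) := by simp [ha]
    simp only [hfa, Equiv.ofBijective_symm_apply_apply, add_sub_cancel_right]
  right_inv := by
    rintro ⟨b, hb : g b = c'⟩
    simp [hg, hb]

end FiberShift

theorem strongGridInf_eq_or_adj_add {p d : ℤ × ℤ} (h₁ : |d.1| ≤ 1) (h₂ : |d.2| ≤ 1) :
    p + d = p ∨ strongGridInf.Adj p (p + d) := by
  by_cases hd : d = 0
  · simp [hd]
  · refine .inr ⟨by simpa using hd, ?_, ?_⟩ <;> simpa [abs_sub_comm]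

def formD : ℤ × ℤ →+ ZMod 7 where
  toFun p := ((3 * p.1 + p.2 : ℤ) : ZMod 7)
  map_zero' := by simp
  map_add' p q := by simp only [Prod.fst_add, Prod.snd_add]; push_cast; ring

def formD' : ℤ × ℤ →+ ZMod 7 where
  toFun p := ((p.1 + 2 * p.2 : ℤ) : ZMod 7)
  map_zero' := by simp
  map_add' p q := by simp only [Prod.fst_add, Prod.snd_add]; push_cast; ring

def guardOffset : ZMod 7 → ℤ × ℤ := ![(0, 0), (-1, 1), (0, 1), (1, 1), (-1, -1), (0, -1), (1, -1)]

theorem formD'_guardOffset : ∀ t, formD' (guardOffset t) = t := by decide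

theorem bijective_formD_comp_guardOffset : Function.Bijective (formD ∘ guardOffset) := by decide

theorem abs_guardOffset_le_one : ∀ t, |(guardOffset t).1| ≤ 1 ∧ |(guardOffset t).2| ≤ 1 := by
  decide

/-- From any configuration `D_c`, after an attack at `v = (x,y)` the guards can move —
each staying in place or moving to an adjacent vertex — into the configuration
`D'_{c'}` with `c' = x + 2y (mod 7)`, which contains the attacked vertex. -/
theorem move_Dset_to_D'set (c : ZMod 7) (x y : ℤ) :
    (x, y) ∈ D'set ((x + 2 * y : ℤ) : ZMod 7) ∧
      ∃ φ : (Dset c) ≃ (D'set ((x + 2 * y : ℤ) : ZMod 7)),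
        ∀ u : Dset c, (φ u : ℤ × ℤ) = (u : ℤ × ℤ) ∨
          strongGridInf.Adj (u : ℤ × ℤ) (φ u : ℤ × ℤ) := by
  refine ⟨rfl, fiberShiftEquiv formD formD' guardOffset formD'_guardOffset
    bijective_formD_comp_guardOffset c _, fun u => ?_⟩
  obtain ⟨h₁, h₂⟩ := abs_guardOffset_le_one (((x + 2 * y : ℤ) : ZMod 7) - formD' u)
  exact strongGridInf_eq_or_adj_add h₁ h₂
end

section
/- (Attack at (i+1,j−1), Table 1.) Let c ∈ ℤ/7ℤ and let (i,j) ∈ ℤ × ℤ satisfy 3i + j ≡ c (mod 7), and set c' = (i+1) + 2(j−1) (mod 7). Then: (a) the seven points (i,j), (i+2,j+1), (i+1,j+4), (i−1,j+3), (i−3,j+2), (i−2,j−1), (i−4,j+5) all lie in D_c and, together with all their translates by vectors (7a,7b) with a,b ∈ ℤ, they exhaust D_c, each element of D_c arising exactly once; (b) the map φ that sends, for all a,b ∈ ℤ, (i,j)+(7a,7b) ↦ (i+1,j−1)+(7a,7b), (i+2,j+1)+(7a,7b) ↦ (i+2,j+2)+(7a,7b), (i+1,j+4)+(7a,7b) ↦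 (i,j+3)+(7a,7b), (i−1,j+3)+(7a,7b) ↦ (i−2,j+4)+(7a,7b), (i−3,j+2)+(7a,7b) ↦ (i−3,j+1)+(7a,7b), (i−2,j−1)+(7a,7b) ↦ (i−1,j)+(7a,7b), and fixes every translate (i−4,j+5)+(7a,7b) (the anchors), is a well-defined bijection from D_c onto D'_{c'}; (c) every u ∈ D_c satisfies φ(u) = u or φ(u) adjacent to u in G∞; in particular the attacked vertex (i+1,j−1) ∈ D'_{c'} is occupied after the move. -/
open Set Function

section ResidueShift

variable {G H : Type*} [AddCommGroup G] [AddCommGroup H] (π : G →+ H) (p : G) (δ : H → G)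

def residueShift (u : G) : G := u + δ (π (u - p))

theorem residueShift_add_of_map_eq_zero {u v : G} (hv : π v = 0) :
    residueShift π p δ (u + v) = residueShift π p δ u + v := by
  simp only [residueShift, add_sub_right_comm u v p, map_add, hv, add_zero]
  abel

theorem residueShift_base_add (o : G) : residueShift π p δ (p + o) = p + (o + δ (π o)) := by
  simp only [residueShift, add_sub_cancel_left, add_assoc]

theorem map_residueShift_sub (u : G) :
    π (residueShift π p δ u - p) = π (u - p) + π (δ (π (u - p))) := by
  rw [residueShift, add_sub_right_comm, map_add]

theorem bijOn_residueShift {S T : Set H} (h : BijOn (fun r => r + π (δ r)) S T) :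
    BijOn (residueShift π p δ) ((fun u => π (u - p)) ⁻¹' S) ((fun u => π (u - p)) ⁻¹' T) := by
  refine ⟨fun u hu => ?_, fun u hu v hv huv => ?_, fun w hw => ?_⟩
  · simpa only [mem_preimage, map_residueShift_sub] using h.mapsTo hu
  · have hclass : π (u - p) = π (v - p) := h.injOn hu hv <| by
      simpa only [map_residueShift_sub] using congrArg (fun x => π (x - p)) huv
    simpa only [residueShift, hclass, add_left_inj] using huv
  · obtain ⟨r, hr, hrw : r + π (δ r) = π (w - p)⟩ := h.surjOn hw
    have hclass : π (w - δ r - p) = r := by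
      rw [sub_right_comm, map_sub, ← hrw, add_sub_cancel_right]
    exact ⟨w - δ r, by simpa only [mem_preimage, hclass] using hr, by
      simp only [residueShift, hclass, sub_add_cancel]⟩

theorem existsUnique_eq_add_add {ι L : Type*} {S : Set H} (o : ι → G) (e : L → G)
    (he : Injective e) (hker : ∀ v, π v = 0 ↔ v ∈ range e) (ho : BijOn (π ∘ o) univ S)
    {u : G} (hu : π (u - p) ∈ S) : ∃! q : ι × L, u = p + o q.1 + e q.2 := by
  obtain ⟨k, -, hk⟩ := ho.surjOn hu
  obtain ⟨l, hl⟩ := (hker (u - p - o k)).1 (by rw [map_sub, ← hk, comp_apply, sub_self])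
  refine ⟨(k, l), show u = p + o k + e l by rw [hl]; abel, fun ⟨k', l'⟩ hu' => ?_⟩
  change u = p + o k' + e l' at hu'
  subst hu'
  have hk' : k' = k := ho.injOn (mem_univ _) (mem_univ _) <| by
    change π (o k') = (π ∘ o) k
    rw [hk, add_assoc, add_sub_cancel_left, map_add, (hker _).2 ⟨l', rfl⟩, add_zero]
  subst hk'
  congr 1
  exact he (by rw [hl]; abel)

end ResidueShift

def castPairHom (n : ℕ) : ℤ × ℤ →+ ZMod n × ZMod n :=
  (Int.castAddHom (ZMod n)).prodMap (Int.castAddHom (ZMod n))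

@[simp]
theorem castPairHom_apply {n : ℕ} (v : ℤ × ℤ) : castPairHom n v = ((v.1 : ZMod n), (v.2 : ZMod n)) :=
  rfl

theorem castPairHom_eq_zero_iff {n : ℕ} (v : ℤ × ℤ) :
    castPairHom n v = 0 ↔ v ∈ range fun q : ℤ × ℤ => ((n : ℤ) * q.1, (n : ℤ) * q.2) := by
  obtain ⟨x, y⟩ := v
  simp only [castPairHom_apply, Prod.mk_eq_zero, ZMod.intCast_zmod_eq_zero_iff_dvd, mem_range,
    Prod.mk.injEq, Prod.exists]
  constructor
  · rintro ⟨⟨a, rfl⟩, ⟨b, rfl⟩⟩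
    exact ⟨a, b, rfl, rfl⟩
  · rintro ⟨a, b, rfl, rfl⟩
    exact ⟨dvd_mul_right _ _, dvd_mul_right _ _⟩

theorem injective_mul_pair {n : ℤ} (hn : n ≠ 0) : Injective fun q : ℤ × ℤ => (n * q.1, n * q.2) :=
  Prod.map_injective.2 ⟨mul_right_injective₀ hn, mul_right_injective₀ hn⟩

theorem Dset_eq_preimage {c : ZMod 7} {i j : ℤ} (hij : ((3 * i + j : ℤ) : ZMod 7) = c) :
    Dset c = (fun u => castPairHom 7 (u - (i, j))) ⁻¹' {r | 3 * r.1 + r.2 = 0} := by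
  ext u
  simp only [Dset, ← hij, castPairHom_apply, mem_ofPred_eq, mem_preimage, Prod.fst_sub,
    Prod.snd_sub, Int.cast_sub, Int.cast_add, Int.cast_mul, Int.cast_ofNat]
  constructor <;> intro h <;> linear_combination h

theorem D'set_eq_preimage (i j : ℤ) :
    D'set (((i + 1) + 2 * (j - 1) : ℤ) : ZMod 7) =
      (fun u => castPairHom 7 (u - (i, j))) ⁻¹' {r | r.1 + 2 * r.2 + 1 = 0} := by
  ext u
  simp only [D'set, castPairHom_apply, mem_ofPred_eq, mem_preimage, Prod.fst_sub, Prod.snd_sub,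
    Int.cast_sub, Int.cast_add, Int.cast_mul, Int.cast_ofNat, Int.cast_one]
  constructor <;> intro h <;> linear_combination h

theorem eq_or_strongGridInf_adj_add (u d : ℤ × ℤ) (h₁ : |d.1| ≤ 1) (h₂ : |d.2| ≤ 1) :
    u + d = u ∨ strongGridInf.Adj u (u + d) := by
  by_cases hd : d = 0
  · exact Or.inl (by rw [hd, add_zero])
  · refine Or.inr ⟨fun h => hd (left_eq_add.1 h), ?_, ?_⟩ <;>
      simpa only [Prod.fst_add, Prod.snd_add, sub_add_cancel_left, abs_neg]

def guardOffsets : Fin 7 → ℤ × ℤ := ![(0, 0), (2, 1), (1, 4), (-1, 3), (-3, 2), (-2, -1), (-4, 5)]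

def targetOffsets : Fin 7 → ℤ × ℤ := ![(1, -1), (2, 2), (0, 3), (-2, 4), (-3, 1), (-1, 0), (-4, 5)]

-- Indexed by the column residue `(u.1 - i) mod 7` of the guard `u`; residue 3 is the anchor's.
def moveTable : ZMod 7 → ℤ × ℤ := ![(1, -1), (-1, -1), (0, 1), (0, 0), (0, -1), (1, 1), (-1, 1)]

theorem bijOn_guardOffsets :
    BijOn (castPairHom 7 ∘ guardOffsets) univ {r | 3 * r.1 + r.2 = 0} := by
  simp only [BijOn, MapsTo, InjOn, SurjOn, subset_def, mem_image]
  decide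

theorem bijOn_moveTable :
    BijOn (fun r : ZMod 7 × ZMod 7 => r + castPairHom 7 (moveTable r.1))
      {r | 3 * r.1 + r.2 = 0} {r | r.1 + 2 * r.2 + 1 = 0} := by
  simp only [BijOn, MapsTo, InjOn, SurjOn, subset_def, mem_image]
  decide

theorem guardOffsets_add_moveTable (k : Fin 7) :
    guardOffsets k + moveTable (castPairHom 7 (guardOffsets k)).1 = targetOffsets k := by
  revert k
  decide

theorem abs_moveTable_le_one (x : ZMod 7) : |(moveTable x).1| ≤ 1 ∧ |(moveTable x).2| ≤ 1 := by
  revert x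
  decide

/-- Table 1, attack at `(i+1, j−1)`: the seven listed guards (the last being the anchor) and their
translates by `(7a,7b)` tile `D_c` exactly; the indicated moves define a bijection
`f : D_c → D'_{c'}` with `c' = (i + 1) + 2 * (j - 1) (mod 7)`, each guard staying in place or moving to an
adjacent vertex, and the attacked vertex `(i+1, j−1)` lies in `D'_{c'}`, hence is occupied. -/
theorem attack_diag_down (c : ZMod 7) (i j : ℤ)
    (hij : ((3 * i + j : ℤ) : ZMod 7) = c)
    (pts tgt : Fin 7 → ℤ × ℤ)
    (hpts : pts = ![(i, j), (i + 2, j + 1), (i + 1, j + 4), (i - 1, j + 3), (i - 3, j + 2), (i - 2, j - 1), (i - 4, j + 5)])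
    (htgt : tgt = ![(i + 1, j - 1), (i + 2, j + 2), (i, j + 3), (i - 2, j + 4), (i - 3, j + 1), (i - 1, j), (i - 4, j + 5)]) :
    (∀ k : Fin 7, pts k ∈ Dset c) ∧
    (∀ u ∈ Dset c, ∃! q : Fin 7 × ℤ × ℤ, u = pts q.1 + (7 * q.2.1, 7 * q.2.2)) ∧
    ∃ f : ℤ × ℤ → ℤ × ℤ,
      (∀ k : Fin 7, ∀ a b : ℤ, f (pts k + (7 * a, 7 * b)) = tgt k + (7 * a, 7 * b)) ∧
      Set.BijOn f (Dset c) (D'set (((i + 1) + 2 * (j - 1) : ℤ) : ZMod 7)) ∧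
      (∀ u ∈ Dset c, f u = u ∨ strongGridInf.Adj u (f u)) ∧
      ((i + 1, j - 1)) ∈ D'set (((i + 1) + 2 * (j - 1) : ℤ) : ZMod 7) := by
  replace hpts : pts = fun k => (i, j) + guardOffsets k := by
    rw [hpts]; funext k; fin_cases k <;> simp [guardOffsets, sub_eq_add_neg]
  replace htgt : tgt = fun k => (i, j) + targetOffsets k := by
    rw [htgt]; funext k; fin_cases k <;> simp [targetOffsets, sub_eq_add_neg]
  subst hpts htgt
  rw [Dset_eq_preimage hij]
  refine ⟨fun k => ?_, fun u hu => ?_, residueShift (castPairHom 7) (i, j) (fun r => moveTable r.1),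
    fun k a b => ?_, ?_, fun u _ => ?_, rfl⟩
  · rw [mem_preimage, add_sub_cancel_left]
    exact bijOn_guardOffsets.mapsTo (mem_univ k)
  · exact existsUnique_eq_add_add _ _ _ _ (injective_mul_pair (by norm_num))
      castPairHom_eq_zero_iff bijOn_guardOffsets hu
  · rw [residueShift_add_of_map_eq_zero _ _ _ ((castPairHom_eq_zero_iff _).2 ⟨(a, b), rfl⟩),
      residueShift_base_add, guardOffsets_add_moveTable]
  · rw [D'set_eq_preimage]
    exact bijOn_residueShift _ _ _ bijOn_moveTable
  · exact eq_or_strongGridInf_adj_add u _ (abs_moveTable_le_one _).1 (abs_moveTable_le_one _).2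
end
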